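/- Let k > 0, σ ≥ 0, τ₁ ≥ 0, τ₂ ∈ ℝ, and let Π be a real symmetric 2×2 matrix. Let M₀ := [[0, k], [k, −2]] and for ω ∈ ℝ let D(ω) := [[0, iω/(1 + σ·iω)], [−iω/(1 − σ·iω), 0]] (a Hermitian 2×2 complex matrix). If the Hermitian matrix Π − τ₁·M₀ − τ₂·D(ω) is positive semidefinite for every ω ∈ ℝ, then Π − τ₁·M₀ is positive semidefinite, and consequently S(τ₁·M₀) ⊆ S(Π). -/

import Mathlib

open Matrix
open scoped ComplexOrder

/-! The dynamic term `D(ω)` vanishes at `ω = 0`, so the hypothesis at that frequency already says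
that `Π − τ₁·M₀` is positive semidefinite. The region of a positive semidefinite matrix is all
of `ℂ`, and the defining inequality of `S` is linear in the matrix, so
`S(τ₁·M₀) = S(Π − τ₁·M₀) ∩ S(τ₁·M₀) ⊆ S(Π)`. -/

/-- The region `S(Π)` associated with a real symmetric 2×2 matrix `Π`:
`S(Π) = {z ∈ ℂ : Π₀₀ + 2·Π₀₁·Re z + Π₁₁·|z|² ≥ 0}`. -/
def SRegionM (P : Matrix (Fin 2) (Fin 2) ℝ) : Set ℂ :=
  {z : ℂ | 0 ≤ P 0 0 + 2 * P 0 1 * z.re + P 1 1 * ‖z‖ ^ 2}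

/-- The static Popov multiplier `M₀ = [[0, k], [k, −2]]`. -/
def popovM0 (k : ℝ) : Matrix (Fin 2) (Fin 2) ℝ := !![0, k; k, -2]

/-- The dynamic Popov multiplier term
`D(ω) = [[0, iω/(1 + σ·iω)], [−iω/(1 − σ·iω), 0]]`. -/
noncomputable def popovD (σ ω : ℝ) : Matrix (Fin 2) (Fin 2) ℂ :=
  !![0, (Complex.I * ω) / (1 + σ * (Complex.I * ω));
     (-(Complex.I * ω)) / (1 - σ * (Complex.I * ω)), 0]

lemma popovD_zero (σ : ℝ) : popovD σ 0 = 0 := by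
  ext i j
  fin_cases i <;> fin_cases j <;> simp [popovD]

lemma Matrix.PosSemidef.of_map_ofReal {n : Type*} [Fintype n] {Q : Matrix n n ℝ}
    (h : (Q.map Complex.ofReal).PosSemidef) : Q.PosSemidef := by
  refine .of_dotProduct_mulVec_nonneg ?_ fun x ↦ ?_
  · ext i j
    simpa using h.1.apply i j
  · have hx := h.dotProduct_mulVec_nonneg (fun i ↦ (x i : ℂ))
    have hcast : star (fun i ↦ (x i : ℂ)) ⬝ᵥ Q.map Complex.ofReal *ᵥ (fun i ↦ (x i : ℂ))
        = ((star x ⬝ᵥ Q *ᵥ x : ℝ) : ℂ) := by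
      simp [dotProduct, mulVec]
    exact_mod_cast hcast ▸ hx

lemma mem_SRegionM_of_posSemidef {Q : Matrix (Fin 2) (Fin 2) ℝ} (hQ : Q.PosSemidef) (z : ℂ) :
    z ∈ SRegionM Q := by
  have hsymm : Q 1 0 = Q 0 1 := by simpa using hQ.1.apply 0 1
  have hline : 0 ≤ Q 0 0 + 2 * Q 0 1 * z.re + Q 1 1 * z.re ^ 2 := by
    have := hQ.dotProduct_mulVec_nonneg ![1, z.re]
    simp [dotProduct, mulVec, hsymm] at this
    linarith
  have hQ11 : 0 ≤ Q 1 1 := hQ.diag_nonneg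
  have hre : z.re ^ 2 ≤ ‖z‖ ^ 2 := by
    rw [Complex.sq_norm, sq]; exact Complex.re_sq_le_normSq z
  show 0 ≤ Q 0 0 + 2 * Q 0 1 * z.re + Q 1 1 * ‖z‖ ^ 2
  nlinarith [mul_le_mul_of_nonneg_left hre hQ11]

lemma SRegionM_inter_subset_SRegionM_add (A B : Matrix (Fin 2) (Fin 2) ℝ) :
    SRegionM A ∩ SRegionM B ⊆ SRegionM (A + B) := by
  rintro z ⟨hA, hB⟩
  simp only [SRegionM, Set.mem_ofPred_eq, Matrix.add_apply] at hA hB ⊢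
  linarith

theorem popov_multiplier_reduction_general (k σ τ₁ τ₂ : ℝ)
    (P : Matrix (Fin 2) (Fin 2) ℝ)
    (hpsd : ∀ ω : ℝ,
      (P.map Complex.ofReal - τ₁ • (popovM0 k).map Complex.ofReal -
        (τ₂ : ℂ) • popovD σ ω).PosSemidef) :
    (P - τ₁ • popovM0 k).PosSemidef ∧ SRegionM (τ₁ • popovM0 k) ⊆ SRegionM P := by
  have hQ : (P - τ₁ • popovM0 k).PosSemidef := by
    refine .of_map_ofReal ?_
    have h0 := hpsd 0
    rw [popovD_zero, smul_zero, sub_zero] at h0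
    convert h0 using 1
    ext i j
    simp
  refine ⟨hQ, fun z hz ↦ ?_⟩
  simpa using SRegionM_inter_subset_SRegionM_add _ _ ⟨mem_SRegionM_of_posSemidef hQ z, hz⟩

/-- If `Π − τ₁·M₀ − τ₂·D(ω)` is positive semidefinite for every `ω ∈ ℝ`
(`k > 0`, `σ ≥ 0`, `τ₁ ≥ 0`, `τ₂ ∈ ℝ`), then `Π − τ₁·M₀` is positive semidefinite,
and consequently `S(τ₁·M₀) ⊆ S(Π)`. -/
theorem popov_multiplier_reduction (k σ τ₁ τ₂ : ℝ) (hk : 0 < k) (hσ : 0 ≤ σ)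
    (hτ₁ : 0 ≤ τ₁) (P : Matrix (Fin 2) (Fin 2) ℝ) (hP : P.IsSymm)
    (hpsd : ∀ ω : ℝ,
      (P.map Complex.ofReal - τ₁ • (popovM0 k).map Complex.ofReal -
        (τ₂ : ℂ) • popovD σ ω).PosSemidef) :
    (P - τ₁ • popovM0 k).PosSemidef ∧ SRegionM (τ₁ • popovM0 k) ⊆ SRegionM P :=
  popov_multiplier_reduction_general k σ τ₁ τ₂ P hpsd
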